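/- If U ∈ E satisfies a Gaussian bound |U(z)| ≤ C₀e^{-c₀|z|²} with 0 < c₀ ≤ 1/2, then for every c₁ < c₀/(1+2c₀) there exists C₁ > 0 such that |(∂_z - z̄/2)U(z)| ≤ C₁ e^{-c₁|z|²} for all z ∈ ℂ, where U is viewed via the reproducing formula U(z) = (1/π)e^{-|z|²/2}∫_ℂ e^{w̄z - |w|²/2}U(w)dL(w). -/

import Mathlib

/-!
Since `|w - z|² = |w|² - 2 Re(w̄z) + |z|²`, the kernel satisfies
`|(w̄ - z̄) e^{w̄z - |w|²/2}| = |w - z| e^{(|z|² - |w - z|²)/2}`. By the triangle inequality and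
Young's inequality, `c₁ < c₀/(1 + 2c₀)` gives `ε > 0` with
`|w - z|²/2 + c₀|w|² ≥ ε|w - z|² + c₁|z|²`, so the integral is at most
`C₀ e^{(1/2 - c₁)|z|²} ∫ |v| e^{-ε|v|²} dL(v)`, and the prefactor `e^{-|z|²/2}` absorbs the growth.
-/

open MeasureTheory Complex
open ComplexConjugate

lemma mul_exp_neg_mul_sq_le {b : ℝ} (hb : 0 < b) (t : ℝ) :
    t * Real.exp (-b * t ^ 2) ≤ (b⁻¹ + 1) * Real.exp (-(b / 2) * t ^ 2) := by
  have hlin : t ≤ (b⁻¹ + 1) * Real.exp (b / 2 * t ^ 2) := by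
    have hb' : b⁻¹ * b = 1 := inv_mul_cancel₀ hb.ne'
    calc t ≤ b⁻¹ + b / 4 * t ^ 2 := by nlinarith [sq_nonneg (b / 2 * t - 1)]
      _ ≤ (b⁻¹ + 1) * (b / 2 * t ^ 2 + 1) := by nlinarith [sq_nonneg t]
      _ ≤ (b⁻¹ + 1) * Real.exp (b / 2 * t ^ 2) := by
        gcongr; exact Real.add_one_le_exp _
  set g := Real.exp (-(b / 2) * t ^ 2)
  calc t * Real.exp (-b * t ^ 2) = t * g * g := by
        rw [mul_assoc, ← Real.exp_add]; ring_nf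
    _ ≤ (b⁻¹ + 1) * Real.exp (b / 2 * t ^ 2) * g * g := by gcongr
    _ = (b⁻¹ + 1) * g := by
        rw [mul_assoc (b⁻¹ + 1), ← Real.exp_add]; simp

section InnerProductSpace

variable {V : Type*} [NormedAddCommGroup V] [InnerProductSpace ℝ V] [FiniteDimensional ℝ V]
  [MeasurableSpace V] [BorelSpace V]

lemma integrable_exp_neg_mul_sq_norm {b : ℝ} (hb : 0 < b) :
    Integrable (fun v : V ↦ Real.exp (-b * ‖v‖ ^ 2)) := by
  have h := GaussianFourier.integrable_cexp_neg_mul_sq_norm_add (V := V)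
    (b := (b : ℂ)) (by simpa using hb) 0 0
  refine h.norm.congr (ae_of_all _ fun v ↦ ?_)
  simp only [zero_mul, add_zero, Complex.norm_exp]
  norm_cast

lemma integrable_norm_mul_exp_neg_mul_sq_norm {b : ℝ} (hb : 0 < b) :
    Integrable (fun v : V ↦ ‖v‖ * Real.exp (-b * ‖v‖ ^ 2)) := by
  refine ((integrable_exp_neg_mul_sq_norm (V := V) (half_pos hb)).const_mul (b⁻¹ + 1)).mono'
    (by fun_prop) (ae_of_all _ fun v ↦ ?_)
  rw [Real.norm_of_nonneg (by positivity)]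
  exact mul_exp_neg_mul_sq_le hb ‖v‖

end InnerProductSpace

lemma exists_pos_mul_sq_norm_add_mul_sq_norm_add_le {E : Type*} [SeminormedAddGroup E]
    {c₀ c₁ : ℝ} (hc₀ : 0 < c₀) (hc₁ : 0 ≤ c₁) (h : c₁ * (1 + 2 * c₀) < c₀) :
    ∃ ε > 0, ∀ x y : E, ε * ‖x‖ ^ 2 + c₁ * ‖x + y‖ ^ 2 ≤ ‖x‖ ^ 2 / 2 + c₀ * ‖y‖ ^ 2 := by
  refine ⟨1 / 2 - c₁ * (1 + 2 * c₀) / (2 * c₀), ?_, fun x y ↦ ?_⟩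
  · have : c₁ * (1 + 2 * c₀) / (2 * c₀) < 1 / 2 := by
      rw [div_lt_iff₀ (by positivity)]; linarith
    linarith
  set a := ‖x‖
  set b := ‖y‖
  have htri : ‖x + y‖ ^ 2 ≤ (a + b) ^ 2 := by gcongr; exact norm_add_le x y
  have hyoung : 2 * a * b ≤ a ^ 2 / (2 * c₀) + 2 * c₀ * b ^ 2 := by
    have := sq_nonneg (a - 2 * c₀ * b)
    rw [div_add' _ _ _ (by positivity), le_div_iff₀ (by positivity)]
    nlinarith
  have hweight :
      c₁ * ‖x + y‖ ^ 2 ≤ c₁ * (1 + 2 * c₀) / (2 * c₀) * a ^ 2 + c₁ * (1 + 2 * c₀) * b ^ 2 := by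
    calc c₁ * ‖x + y‖ ^ 2 ≤ c₁ * (a ^ 2 + (a ^ 2 / (2 * c₀) + 2 * c₀ * b ^ 2) + b ^ 2) := by
          gcongr; nlinarith
      _ = _ := by field_simp; ring
  linarith [mul_le_mul_of_nonneg_right h.le (sq_nonneg b)]

lemma re_conj_mul_sub_sq_norm_div_two (z w : ℂ) :
    (conj w * z - (‖w‖ : ℂ) ^ 2 / 2).re = (‖z‖ ^ 2 - ‖w - z‖ ^ 2) / 2 := by
  simp only [Complex.sq_norm, normSq_apply, sub_re, mul_re, conj_re, conj_im, sub_im, div_ofNat_re,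
    ← ofReal_pow, ofReal_re]
  ring

lemma norm_conj_sub_mul_cexp (z w : ℂ) :
    ‖(conj w - conj z) * cexp (conj w * z - (‖w‖ : ℂ) ^ 2 / 2)‖ =
      ‖w - z‖ * Real.exp ((‖z‖ ^ 2 - ‖w - z‖ ^ 2) / 2) := by
  rw [norm_mul, ← map_sub, norm_conj, norm_exp, re_conj_mul_sub_sq_norm_div_two]

lemma norm_conj_sub_mul_cexp_mul_le {U : ℂ → ℂ} {C₀ c₀ c₁ ε : ℝ}
    (hU : ∀ w, ‖U w‖ ≤ C₀ * Real.exp (-c₀ * ‖w‖ ^ 2))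
    (hε : ∀ x y : ℂ, ε * ‖x‖ ^ 2 + c₁ * ‖x + y‖ ^ 2 ≤ ‖x‖ ^ 2 / 2 + c₀ * ‖y‖ ^ 2) (z w : ℂ) :
    ‖(conj w - conj z) * cexp (conj w * z - (‖w‖ : ℂ) ^ 2 / 2) * U w‖ ≤
      C₀ * Real.exp ((1 / 2 - c₁) * ‖z‖ ^ 2) * (‖w - z‖ * Real.exp (-ε * ‖w - z‖ ^ 2)) := by
  have hC₀ : 0 ≤ C₀ := nonneg_of_mul_nonneg_left ((norm_nonneg _).trans (hU 0)) (Real.exp_pos _)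
  have hexp : (‖z‖ ^ 2 - ‖w - z‖ ^ 2) / 2 + -c₀ * ‖w‖ ^ 2 ≤
      (1 / 2 - c₁) * ‖z‖ ^ 2 + -ε * ‖w - z‖ ^ 2 := by
    have := hε (z - w) w
    rw [sub_add_cancel, norm_sub_rev] at this
    linarith
  calc _ = ‖w - z‖ * Real.exp ((‖z‖ ^ 2 - ‖w - z‖ ^ 2) / 2) * ‖U w‖ := by
        rw [norm_mul, norm_conj_sub_mul_cexp]
    _ ≤ ‖w - z‖ * Real.exp ((‖z‖ ^ 2 - ‖w - z‖ ^ 2) / 2) * (C₀ * Real.exp (-c₀ * ‖w‖ ^ 2)) := by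
        gcongr; exact hU w
    _ = C₀ * ‖w - z‖ * Real.exp ((‖z‖ ^ 2 - ‖w - z‖ ^ 2) / 2 + -c₀ * ‖w‖ ^ 2) := by
        rw [Real.exp_add]; ring
    _ ≤ C₀ * ‖w - z‖ * Real.exp ((1 / 2 - c₁) * ‖z‖ ^ 2 + -ε * ‖w - z‖ ^ 2) := by gcongr
    _ = _ := by rw [Real.exp_add]; ring

lemma norm_integral_conj_sub_mul_cexp_mul_le {U : ℂ → ℂ} {C₀ c₀ c₁ ε : ℝ}
    (hU : ∀ w, ‖U w‖ ≤ C₀ * Real.exp (-c₀ * ‖w‖ ^ 2)) (hε₀ : 0 < ε)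
    (hε : ∀ x y : ℂ, ε * ‖x‖ ^ 2 + c₁ * ‖x + y‖ ^ 2 ≤ ‖x‖ ^ 2 / 2 + c₀ * ‖y‖ ^ 2) (z : ℂ) :
    ‖∫ w, (conj w - conj z) * cexp (conj w * z - (‖w‖ : ℂ) ^ 2 / 2) * U w‖ ≤
      C₀ * Real.exp ((1 / 2 - c₁) * ‖z‖ ^ 2) * ∫ v : ℂ, ‖v‖ * Real.exp (-ε * ‖v‖ ^ 2) := by
  rw [← integral_sub_right_eq_self (fun v : ℂ ↦ ‖v‖ * Real.exp (-ε * ‖v‖ ^ 2)) z,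
    ← integral_const_mul]
  exact norm_integral_le_of_norm_le
    (((integrable_norm_mul_exp_neg_mul_sq_norm hε₀).comp_sub_right z).const_mul _)
    (ae_of_all _ (norm_conj_sub_mul_cexp_mul_le hU hε z))

theorem stmt17_general (U : ℂ → ℂ) (C₀ c₀ c₁ : ℝ) (hc₀ : 0 < c₀)
    (hU : ∀ z : ℂ, ‖U z‖ ≤ C₀ * Real.exp (-c₀ * ‖z‖ ^ 2))
    (hc₁ : 0 < c₁) (hc₁' : c₁ < c₀ / (1 + 2 * c₀)) :
    ∃ C₁ > 0, ∀ z : ℂ,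
      ‖((Real.exp (-(‖z‖) ^ 2 / 2) / Real.pi : ℝ) *
          ∫ w : ℂ, ((starRingEnd ℂ) w - (starRingEnd ℂ) z) *
            Complex.exp ((starRingEnd ℂ) w * z - ((‖w‖ : ℂ)) ^ 2 / 2) * U w)‖ ≤
        C₁ * Real.exp (-c₁ * ‖z‖ ^ 2) := by
  obtain ⟨ε, hε₀, hε⟩ := exists_pos_mul_sq_norm_add_mul_sq_norm_add_le (E := ℂ) hc₀ hc₁.le
    ((lt_div_iff₀ (by positivity)).mp hc₁')
  set I := ∫ v : ℂ, ‖v‖ * Real.exp (-ε * ‖v‖ ^ 2)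
  refine ⟨max (C₀ * I / Real.pi) 1, lt_max_of_lt_right one_pos, fun z ↦ ?_⟩
  rw [norm_mul, norm_real, Real.norm_of_nonneg (by positivity)]
  calc _ ≤ Real.exp (-‖z‖ ^ 2 / 2) / Real.pi * (C₀ * Real.exp ((1 / 2 - c₁) * ‖z‖ ^ 2) * I) := by
        gcongr; exact norm_integral_conj_sub_mul_cexp_mul_le hU hε₀ hε z
    _ = C₀ * I / Real.pi * Real.exp (-c₁ * ‖z‖ ^ 2) := by
        rw [show -c₁ * ‖z‖ ^ 2 = -‖z‖ ^ 2 / 2 + (1 / 2 - c₁) * ‖z‖ ^ 2 by ring, Real.exp_add]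
        ring
    _ ≤ _ := by gcongr; exact le_max_left _ _

theorem stmt17 (U : ℂ → ℂ) (hUm : Measurable U) (C₀ c₀ c₁ : ℝ)
    (hC₀ : 0 < C₀) (hc₀ : 0 < c₀) (hc₀' : c₀ ≤ 1 / 2)
    (hU : ∀ z : ℂ, ‖U z‖ ≤ C₀ * Real.exp (-c₀ * ‖z‖ ^ 2))
    (hc₁ : 0 < c₁) (hc₁' : c₁ < c₀ / (1 + 2 * c₀)) :
    ∃ C₁ > 0, ∀ z : ℂ,
      ‖((Real.exp (-(‖z‖) ^ 2 / 2) / Real.pi : ℝ) *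
          ∫ w : ℂ, ((starRingEnd ℂ) w - (starRingEnd ℂ) z) *
            Complex.exp ((starRingEnd ℂ) w * z - ((‖w‖ : ℂ)) ^ 2 / 2) * U w)‖ ≤
        C₁ * Real.exp (-c₁ * ‖z‖ ^ 2) :=
  stmt17_general U C₀ c₀ c₁ hc₀ hU hc₁ hc₁'
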